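/- Let Λ be a continuous linear functional on C([0,1],ℂ), E = ker Λ, F = {u ∈ C¹([0,1],ℂ) : Λu = 0 and Λu′ = 0}, and T : F → E the derivation Tu = u′. For ζ ∈ ℂ, the operator ζ·ι − T : F → E fails to be bijective with continuous inverse if and only if Λ(h_ζ) = 0, where h_ζ(x) = e^{ζx}. -/

import Mathlib

open Set Filter Topology

/-- `u` is continuously differentiable on `[0,1]` with derivative `w`. -/
def DerivOn (u w : C(↥(Set.Icc (0:ℝ) 1), ℂ)) : Prop :=
  ∀ x (hx : x ∈ Set.Icc (0:ℝ) 1),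
    HasDerivWithinAt (fun t : ℝ => u (Set.projIcc 0 1 zero_le_one t))
      (w ⟨x, hx⟩) (Set.Icc 0 1) x

/-- The exponential `h_ζ : x ↦ e^{ζx}` as an element of `C([0,1],ℂ)`. -/
noncomputable def expCM (ζ : ℂ) : C(↥(Set.Icc (0:ℝ) 1), ℂ) :=
  ⟨fun x => Complex.exp (ζ * (x : ℝ)), by fun_prop⟩

/-!
Every solution of `ζ u - u' = f` on `[0,1]` is `u = u(0) h_ζ - v` with
`v(x) = e^{ζx} ∫₀ˣ e^{-ζt} f(t) dt`, because `e^{-ζx} (u + v)(x)` has derivative zero.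
If `Λ h_ζ ≠ 0`, the condition `Λ u = 0` forces `u(0) = Λ v / Λ h_ζ`, so the solution exists,
is unique, and is bounded by a multiple of `‖f‖`. If `Λ h_ζ = 0`, then `0` and `h_ζ` both solve
the homogeneous problem inside `F`.
-/

open scoped Complex

theorem Convex.eq_cexp_mul_of_hasDerivWithinAt {s : Set ℝ} (hs : Convex ℝ s) {g : ℝ → ℂ}
    {ζ : ℂ} (hg : ∀ x ∈ s, HasDerivWithinAt g (ζ * g x) s x) {a x : ℝ} (ha : a ∈ s)
    (hx : x ∈ s) : g x = cexp (ζ * (x - a)) * g a := by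
  let φ : ℝ → ℂ := fun t => cexp (-ζ * t) * g t
  have hφ : ∀ t ∈ s, HasDerivWithinAt φ 0 s t := by
    intro t ht
    have he : HasDerivAt (fun t : ℝ => cexp (-ζ * t)) (cexp (-ζ * t) * -ζ) t :=
      ((hasDerivAt_id (t : ℂ)).const_mul (-ζ)).cexp.comp_ofReal.congr_deriv (by simp)
    exact (he.hasDerivWithinAt.mul (hg t ht)).congr_deriv (by ring)
  have hconst : φ x = φ a := by
    simpa [sub_eq_zero] using hs.norm_image_sub_le_of_norm_hasDerivWithin_le hφ
      (fun _ _ => le_of_eq norm_zero) ha hx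
  simp only [φ] at hconst
  calc g x = cexp (ζ * x) * (cexp (-ζ * x) * g x) := by
        rw [← mul_assoc, ← Complex.exp_add]; simp
    _ = cexp (ζ * (x - a)) * g a := by
        rw [hconst, ← mul_assoc, ← Complex.exp_add]; ring_nf

theorem norm_cexp_mul_ofReal_le (z : ℂ) {x : ℝ} (hx : |x| ≤ 1) :
    ‖cexp (z * x)‖ ≤ Real.exp ‖z‖ :=
  (Complex.norm_exp_le_exp_norm _).trans <| Real.exp_le_exp.2 <| by
    rw [norm_mul, Complex.norm_real, Real.norm_eq_abs]
    exact mul_le_of_le_one_right (norm_nonneg z) hx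

theorem hasDerivAt_cexp_mul_integral (ζ : ℂ) {f : ℝ → ℂ} (hf : Continuous f) (x : ℝ) :
    HasDerivAt (fun x : ℝ => cexp (ζ * x) * ∫ t in (0:ℝ)..x, cexp (-ζ * t) * f t)
      (ζ * (cexp (ζ * x) * ∫ t in (0:ℝ)..x, cexp (-ζ * t) * f t) + f x) x := by
  have hexp (z : ℂ) : HasDerivAt (fun t : ℝ => cexp (z * t)) (cexp (z * x) * z) x :=
    ((hasDerivAt_id (x : ℂ)).const_mul z).cexp.comp_ofReal.congr_deriv (by simp)
  have hint : HasDerivAt (fun x : ℝ => ∫ t in (0:ℝ)..x, cexp (-ζ * t) * f t)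
      (cexp (-ζ * x) * f x) x :=
    ((by fun_prop : Continuous fun t : ℝ => cexp (-ζ * t)).mul hf
      |>.integral_hasStrictDerivAt 0 x).hasDerivAt
  refine ((hexp ζ).mul hint).congr_deriv ?_
  have hinv : cexp (ζ * x) * cexp (-ζ * x) = 1 := by rw [← Complex.exp_add]; simp
  linear_combination f x * hinv

local notation "C₀₁" => C(Set.Icc (0:ℝ) 1, ℂ)

theorem derivOn_of_hasDerivAt {u w : C₀₁} {g : ℝ → ℂ} (hu : ∀ x : Icc (0:ℝ) 1, u x = g x)
    (hg : ∀ x (hx : x ∈ Icc (0:ℝ) 1), HasDerivAt g (w ⟨x, hx⟩) x) : DerivOn u w :=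
  fun x hx => (hg x hx).hasDerivWithinAt.congr
    (fun t ht => by rw [projIcc_of_mem _ ht, hu]) (by rw [projIcc_of_mem _ hx, hu])

theorem derivOn_zero : DerivOn 0 0 := fun x _ => hasDerivWithinAt_const x _ 0

theorem DerivOn.add {u u' v v' : C₀₁} (hu : DerivOn u u') (hv : DerivOn v v') :
    DerivOn (u + v) (u' + v') := fun x hx => (hu x hx).add (hv x hx)

theorem DerivOn.sub {u u' v v' : C₀₁} (hu : DerivOn u u') (hv : DerivOn v v') :
    DerivOn (u - v) (u' - v') := fun x hx => (hu x hx).sub (hv x hx)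

theorem DerivOn.const_smul {u u' : C₀₁} (c : ℂ) (hu : DerivOn u u') :
    DerivOn (c • u) (c • u') := fun x hx => (hu x hx).const_mul c

theorem derivOn_expCM (ζ : ℂ) : DerivOn (expCM ζ) (ζ • expCM ζ) :=
  derivOn_of_hasDerivAt (fun _ => rfl) fun x _ =>
    ((hasDerivAt_id (x : ℂ)).const_mul ζ).cexp.comp_ofReal.congr_deriv
      (by simp [expCM, mul_comm])

theorem expCM_ne_zero (ζ : ℂ) : expCM ζ ≠ 0 := fun h => by
  simpa [expCM] using DFunLike.congr_fun h 0

theorem DerivOn.eq_smul_expCM {v : C₀₁} {ζ : ℂ} (hv : DerivOn v (ζ • v)) :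
    v = v 0 • expCM ζ := by
  ext ⟨x, hx⟩
  have := (convex_Icc (0:ℝ) 1).eq_cexp_mul_of_hasDerivWithinAt
    (g := IccExtend zero_le_one v) (fun y hy => by
      rw [IccExtend_of_mem _ _ hy]; exact hv y hy) (left_mem_Icc.2 zero_le_one) hx
  simpa [IccExtend_of_mem _ _ hx, expCM, mul_comm] using this

noncomputable def expConv (ζ : ℂ) (f : C₀₁) : C₀₁ :=
  ⟨fun x => cexp (ζ * (x : ℝ)) * ∫ t in (0:ℝ)..x, cexp (-ζ * t) * IccExtend zero_le_one f t,
    (Differentiable.continuous fun x => (hasDerivAt_cexp_mul_integral ζ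
      (f.continuous.Icc_extend' (h := zero_le_one)) x).differentiableAt).comp
      continuous_subtype_val⟩

theorem derivOn_expConv (ζ : ℂ) (f : C₀₁) : DerivOn (expConv ζ f) (ζ • expConv ζ f + f) :=
  derivOn_of_hasDerivAt (fun _ => rfl) fun x hx =>
    (hasDerivAt_cexp_mul_integral ζ (f.continuous.Icc_extend' (h := zero_le_one)) x).congr_deriv
      (by rw [IccExtend_of_mem _ _ hx]; rfl)

theorem expConv_apply_zero (ζ : ℂ) (f : C₀₁) : expConv ζ f 0 = 0 := by
  simp [expConv]

theorem norm_expConv_le (ζ : ℂ) (f : C₀₁) : ‖expConv ζ f‖ ≤ Real.exp ‖ζ‖ ^ 2 * ‖f‖ := by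
  refine (ContinuousMap.norm_le _ (by positivity)).2 fun ⟨x, hx0, hx1⟩ => ?_
  have habs {t : ℝ} (ht0 : 0 ≤ t) (ht1 : t ≤ 1) : |t| ≤ 1 := by rwa [abs_of_nonneg ht0]
  have hint : ‖∫ t in (0:ℝ)..x, cexp (-ζ * t) * IccExtend zero_le_one f t‖ ≤
      Real.exp ‖ζ‖ * ‖f‖ := by
    refine (intervalIntegral.norm_integral_le_of_norm_le_const
      (C := Real.exp ‖ζ‖ * ‖f‖) fun t ht => ?_).trans ?_
    · rw [uIoc_of_le hx0] at ht
      rw [norm_mul]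
      have hexp := norm_cexp_mul_ofReal_le (-ζ) (habs ht.1.le (ht.2.trans hx1))
      rw [norm_neg] at hexp
      exact mul_le_mul hexp (f.norm_coe_le_norm _) (norm_nonneg _) (Real.exp_nonneg _)
    · rw [sub_zero, abs_of_nonneg hx0]
      exact mul_le_of_le_one_right (by positivity) hx1
  calc ‖expConv ζ f ⟨x, hx0, hx1⟩‖
      = ‖cexp (ζ * x)‖ * ‖∫ t in (0:ℝ)..x, cexp (-ζ * t) * IccExtend zero_le_one f t‖ :=
        norm_mul _ _
    _ ≤ Real.exp ‖ζ‖ * (Real.exp ‖ζ‖ * ‖f‖) :=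
        mul_le_mul (norm_cexp_mul_ofReal_le ζ (habs hx0 hx1)) hint (norm_nonneg _)
          (Real.exp_nonneg _)
    _ = Real.exp ‖ζ‖ ^ 2 * ‖f‖ := by ring

theorem DerivOn.eq_smul_expCM_sub_expConv {u u' f : C₀₁} {ζ : ℂ} (hu : DerivOn u u')
    (heq : ζ • u - u' = f) : u = u 0 • expCM ζ - expConv ζ f := by
  have hv : DerivOn (u + expConv ζ f) (ζ • (u + expConv ζ f)) := by
    convert hu.add (derivOn_expConv ζ f) using 1
    rw [← heq]
    module
  calc u = (u + expConv ζ f) - expConv ζ f := (add_sub_cancel_right _ _).symm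
    _ = u 0 • expCM ζ - expConv ζ f := by
      rw [hv.eq_smul_expCM, ContinuousMap.add_apply, expConv_apply_zero, add_zero]

/-- `(ζ ι - T)⁻¹ f`, when `Λ h_ζ ≠ 0`. -/
noncomputable def derivResolvent (Λ : C₀₁ →L[ℂ] ℂ) (ζ : ℂ) (f : C₀₁) : C₀₁ :=
  (Λ (expConv ζ f) / Λ (expCM ζ)) • expCM ζ - expConv ζ f

theorem solution_iff_eq_derivResolvent {Λ : C₀₁ →L[ℂ] ℂ} {ζ : ℂ} (hΛ : Λ (expCM ζ) ≠ 0)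
    {f : C₀₁} (hf : Λ f = 0) (u : C₀₁) :
    (∃ u', DerivOn u u' ∧ Λ u = 0 ∧ Λ u' = 0 ∧ ζ • u - u' = f) ↔ u = derivResolvent Λ ζ f := by
  constructor
  · rintro ⟨u', hu, hΛu, -, heq⟩
    have hgen := hu.eq_smul_expCM_sub_expConv heq
    have hu0 : u 0 = Λ (expConv ζ f) / Λ (expCM ζ) := by
      rw [hgen, map_sub, map_smul, smul_eq_mul, sub_eq_zero] at hΛu
      rw [← hΛu, mul_div_cancel_right₀ _ hΛ]
    rw [hgen, hu0, derivResolvent]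
  · rintro rfl
    have hΛu : Λ (derivResolvent Λ ζ f) = 0 := by
      rw [derivResolvent, map_sub, map_smul, smul_eq_mul, div_mul_cancel₀ _ hΛ, sub_self]
    refine ⟨ζ • derivResolvent Λ ζ f - f, ?_, hΛu, by simp [hΛu, hf], sub_sub_cancel _ _⟩
    have hD := ((derivOn_expCM ζ).const_smul (Λ (expConv ζ f) / Λ (expCM ζ))).sub
      (derivOn_expConv ζ f)
    rw [derivResolvent]
    convert hD using 1
    module

theorem norm_derivResolvent_le (Λ : C₀₁ →L[ℂ] ℂ) (ζ : ℂ) (f : C₀₁) :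
    ‖derivResolvent Λ ζ f‖ ≤
      (‖Λ‖ * ‖expCM ζ‖ / ‖Λ (expCM ζ)‖ + 1) * Real.exp ‖ζ‖ ^ 2 * ‖f‖ := by
  have hc : ‖Λ (expConv ζ f) / Λ (expCM ζ)‖ * ‖expCM ζ‖ ≤
      ‖Λ‖ * ‖expCM ζ‖ / ‖Λ (expCM ζ)‖ * ‖expConv ζ f‖ := by
    rw [norm_div, div_mul_eq_mul_div, div_mul_eq_mul_div, mul_right_comm]
    gcongr
    exact Λ.le_opNorm _
  calc ‖derivResolvent Λ ζ f‖
      ≤ ‖Λ (expConv ζ f) / Λ (expCM ζ)‖ * ‖expCM ζ‖ + ‖expConv ζ f‖ := by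
        rw [derivResolvent, ← norm_smul]; exact norm_sub_le _ _
    _ ≤ (‖Λ‖ * ‖expCM ζ‖ / ‖Λ (expCM ζ)‖ + 1) * ‖expConv ζ f‖ := by linarith
    _ ≤ _ := by rw [mul_assoc]; gcongr; exact norm_expConv_le ζ f

/-- For a continuous linear functional `Λ` on `C([0,1],ℂ)`, with `E = ker Λ`,
`F = {u ∈ C¹ : Λu = 0, Λu' = 0}` and `T` the derivation, the operator
`ζ·ι - T : F → E` fails to be bijective with continuous inverse iff
`Λ(h_ζ) = 0`. -/
theorem stmt_12 (Λ : C(↥(Set.Icc (0:ℝ) 1), ℂ) →L[ℂ] ℂ) (ζ : ℂ) :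
    (¬ ((∀ f, Λ f = 0 → ∃! u, ∃ u',
          DerivOn u u' ∧ Λ u = 0 ∧ Λ u' = 0 ∧ ζ • u - u' = f) ∧
        (∃ C : ℝ, ∀ f u, Λ f = 0 →
          (∃ u', DerivOn u u' ∧ Λ u = 0 ∧ Λ u' = 0 ∧ ζ • u - u' = f) →
          ‖u‖ ≤ C * ‖f‖)))
    ↔ Λ (expCM ζ) = 0 := by
  constructor
  · intro hnot
    by_contra hΛ
    refine hnot ⟨fun f hf => ?_,
      ⟨(‖Λ‖ * ‖expCM ζ‖ / ‖Λ (expCM ζ)‖ + 1) * Real.exp ‖ζ‖ ^ 2, fun f u hf hu => ?_⟩⟩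
    · exact ⟨derivResolvent Λ ζ f, (solution_iff_eq_derivResolvent hΛ hf _).2 rfl,
        fun u hu => (solution_iff_eq_derivResolvent hΛ hf u).1 hu⟩
    · rw [(solution_iff_eq_derivResolvent hΛ hf u).1 hu]
      exact norm_derivResolvent_le Λ ζ f
  · rintro hΛ ⟨hunique, -⟩
    have hzero : ∃ u', DerivOn 0 u' ∧ Λ 0 = 0 ∧ Λ u' = 0 ∧ ζ • (0 : C₀₁) - u' = 0 :=
      ⟨0, derivOn_zero, map_zero Λ, map_zero Λ, by ext; simp⟩
    have hexp : ∃ u', DerivOn (expCM ζ) u' ∧ Λ (expCM ζ) = 0 ∧ Λ u' = 0 ∧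
        ζ • expCM ζ - u' = 0 :=
      ⟨ζ • expCM ζ, derivOn_expCM ζ, hΛ, by simp [hΛ], sub_self _⟩
    exact expCM_ne_zero ζ ((hunique 0 (map_zero Λ)).unique hexp hzero)
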